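/- arXiv:1406.7748 — 2 statements merged into one kernel-verified Lean document; each statement's English description precedes it below -/
import Mathlib

section
/- Let V be a Banach space, T > 0 and μ > 1, and let h ∈ 𝒞₃(V) satisfy δh = 0 and ‖h‖_μ < ∞. Then there exists a unique r ∈ 𝒞₂(V) such that δr = h and ‖r‖_ν < ∞ for some ν > 1; moreover this r satisfies ‖r‖_μ ≤ (2^μ − 2)^{−1} ‖h‖_μ. (r = Λh, the one-dimensional sewing map.) -/
/-!
Any `ψ` with `δψ = h` will do as a first guess, e.g. `ψ a b = -h a b 0` by the cocycle identity.
It is corrected by an increment: `r = ψ - δF`, where `F t` is the limit of the Riemann sums of `ψ`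
over the level-`n` dyadic grid of `[0, T]` stopped at `t`. Consecutive levels differ by sums of
`h` over `2ⁿ` cells, each of size `O(2^(-nμ))`, and only about `2ⁿ |t - s| / T` of these cells
see a difference between the times `t` and `s`; this makes `r` μ-Hölder.

Conversely, if `δr = h` and `‖r‖_ν < ∞` with `ν > 1`, the Riemann sums of `r` over the dyadic
partitions of `[s, t]` tend to `0`, so `r t s` is the sum of the series of the defects of `h`
between consecutive dyadic partitions of `[s, t]`. This gives uniqueness, and summing the defect
bounds `2ᵐ C (|t - s| / 2^(m+1))^μ` gives `‖r t s‖ ≤ C |t - s|^μ / (2^μ - 2)`.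
-/

open Set Finset Filter Topology

noncomputable section

namespace Sewing

variable {V : Type*} [NormedAddCommGroup V]

def coboundary (ψ : ℝ → ℝ → V) (t u s : ℝ) : V := ψ t s - ψ t u - ψ u s

/-- The form in which `‖h‖_μ ≤ C` enters the sewing argument
(see `isControlledOn_of_decomposition`). -/
def IsControlledOn (S : Set ℝ) (C μ : ℝ) (h : ℝ → ℝ → ℝ → V) : Prop :=
  ∀ a b c, a ∈ S → b ∈ S → c ∈ S → ‖h a b c‖ ≤ C * max |a - b| |b - c| ^ μ

lemma sum_range_two_mul {M : Type*} [AddCommMonoid M] (n : ℕ) (f : ℕ → M) :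
    ∑ i ∈ range (2 * n), f i = ∑ i ∈ range n, (f (2 * i) + f (2 * i + 1)) := by
  induction n with
  | zero => simp
  | succ n ih =>
    rw [mul_add, mul_one, sum_range_succ, sum_range_succ, sum_range_succ, ih, add_assoc]

lemma two_pow_mul_div_two_pow_rpow {e : ℝ} (he : 0 ≤ e) (ν : ℝ) (n : ℕ) :
    2 ^ n * (e / 2 ^ n) ^ ν = e ^ ν * ((2 : ℝ) ^ (1 - ν)) ^ n := by
  rw [Real.div_rpow he (by positivity), ← Real.rpow_pow_comm zero_le_two,
    Real.rpow_sub zero_lt_two, Real.rpow_one, div_pow]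
  field_simp

lemma two_pow_one_sub_lt_one {ν : ℝ} (hν : 1 < ν) : (2 : ℝ) ^ (1 - ν) < 1 :=
  Real.rpow_lt_one_of_one_lt_of_neg one_lt_two (by linarith)

lemma norm_sum_range_le_of_support {w : ℕ → V} {n : ℕ} {a b c M : ℝ} (hc : 0 < c)
    (ha : 0 ≤ a) (hab : a ≤ b) (hM : 0 ≤ M) (hw : ∀ i < n, ‖w i‖ ≤ M)
    (hsupp : ∀ i < n, w i ≠ 0 → a < (i + 1) * c ∧ i * c < b) :
    ‖∑ i ∈ range n, w i‖ ≤ ((b - a) / c + 2) * M := by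
  set I := Finset.Ico ⌊a / c⌋₊ ⌈b / c⌉₊
  have hsub : ∀ i ∈ range n, i ∉ I → w i = 0 := by
    intro i hn hi
    by_contra hne
    obtain ⟨h₁, h₂⟩ := hsupp i (mem_range.1 hn) hne
    refine hi (Finset.mem_Ico.2 ⟨Nat.lt_succ_iff.1 ((Nat.floor_lt' i.succ_ne_zero).2 ?_),
      Nat.lt_ceil.2 ((lt_div_iff₀ hc).2 h₂)⟩)
    push_cast
    exact (div_lt_iff₀ hc).2 h₁
  have hcard : ((#I : ℕ) : ℝ) ≤ (b - a) / c + 2 := by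
    have h₁ := Nat.ceil_lt_add_one (div_nonneg (ha.trans hab) hc.le)
    have h₂ := Nat.sub_one_lt_floor (a / c)
    have h₃ : a / c ≤ b / c := div_le_div_of_nonneg_right hab hc.le
    rw [Nat.card_Ico, sub_div]
    rcases le_total ⌊a / c⌋₊ ⌈b / c⌉₊ with h | h
    · rw [Nat.cast_sub h]; linarith
    · rw [Nat.sub_eq_zero_of_le h, Nat.cast_zero]; linarith
  calc ‖∑ i ∈ range n, w i‖ = ‖∑ i ∈ range n with i ∈ I, w i‖ := by
        rw [sum_filter_of_ne fun i hi hne => not_not.1 (mt (hsub i hi) hne)]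
    _ ≤ ∑ i ∈ range n with i ∈ I, ‖w i‖ := norm_sum_le _ _
    _ ≤ #I * M := by
        refine (sum_le_card_nsmul _ _ M fun i hi =>
          hw i (mem_range.1 (mem_filter.1 hi).1)).trans ?_
        rw [nsmul_eq_mul]
        gcongr
        exact fun i hi => (Finset.mem_filter.1 hi).2
    _ ≤ ((b - a) / c + 2) * M := mul_le_mul_of_nonneg_right hcard hM

def dyadicPoint (t s : ℝ) (n i : ℕ) : ℝ := s + i / 2 ^ n * (t - s)

section DyadicPoint

variable {t s : ℝ} {n i : ℕ}

lemma dyadicPoint_mem {S : Set ℝ} (hS : Convex ℝ S) (ht : t ∈ S) (hs : s ∈ S)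
    (hi : i ≤ 2 ^ n) : dyadicPoint t s n i ∈ S :=
  hS.add_smul_sub_mem hs ht
    ⟨by positivity, (div_le_one (by positivity)).2 (by exact_mod_cast hi)⟩

@[simp] lemma dyadicPoint_zero : dyadicPoint t s n 0 = s := by simp [dyadicPoint]

@[simp] lemma dyadicPoint_two_pow : dyadicPoint t s n (2 ^ n) = t := by
  simp [dyadicPoint]

lemma dyadicPoint_two_mul : dyadicPoint t s (n + 1) (2 * i) = dyadicPoint t s n i := by
  simp only [dyadicPoint, pow_succ]; push_cast; field_simp

lemma dyadicPoint_succ_sub :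
    dyadicPoint t s n (i + 1) - dyadicPoint t s n i = (t - s) / 2 ^ n := by
  simp only [dyadicPoint]; push_cast; ring

lemma dyadicPoint_succ_sub_midpoint :
    dyadicPoint t s n (i + 1) - dyadicPoint t s (n + 1) (2 * i + 1)
      = (t - s) / 2 ^ (n + 1) := by
  rw [← dyadicPoint_two_mul (i := i + 1), mul_add, mul_one, dyadicPoint_succ_sub]

lemma dyadicPoint_midpoint_sub :
    dyadicPoint t s (n + 1) (2 * i + 1) - dyadicPoint t s n i = (t - s) / 2 ^ (n + 1) := by
  rw [← dyadicPoint_two_mul (n := n) (i := i), dyadicPoint_succ_sub]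

lemma dyadicPoint_zero_right (T : ℝ) : dyadicPoint T 0 n i = i * (T / 2 ^ n) := by
  simp only [dyadicPoint]; ring

end DyadicPoint

def dyadicSum (ψ : ℝ → ℝ → V) (t s : ℝ) (n : ℕ) : V :=
  ∑ i ∈ range (2 ^ n), ψ (dyadicPoint t s n (i + 1)) (dyadicPoint t s n i)

def dyadicDefect (h : ℝ → ℝ → ℝ → V) (t s : ℝ) (n : ℕ) : V :=
  ∑ i ∈ range (2 ^ n),
    h (dyadicPoint t s n (i + 1)) (dyadicPoint t s (n + 1) (2 * i + 1)) (dyadicPoint t s n i)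

section DyadicSum

variable {ψ : ℝ → ℝ → V} {t s : ℝ}

@[simp] lemma dyadicSum_zero : dyadicSum ψ t s 0 = ψ t s := by
  simp [dyadicSum, dyadicPoint]

lemma dyadicSum_succ (n : ℕ) :
    dyadicSum ψ t s n = dyadicSum ψ t s (n + 1) + dyadicDefect (coboundary ψ) t s n := by
  rw [dyadicSum, dyadicSum, dyadicDefect, pow_succ', sum_range_two_mul, ← sum_add_distrib]
  refine sum_congr rfl fun i _ => ?_
  rw [dyadicPoint_two_mul, show 2 * i + 1 + 1 = 2 * (i + 1) by ring, dyadicPoint_two_mul,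
    coboundary]
  abel

lemma dyadicSum_add_sum_dyadicDefect (n : ℕ) :
    dyadicSum ψ t s n + ∑ m ∈ range n, dyadicDefect (coboundary ψ) t s m = ψ t s := by
  induction n with
  | zero => simp
  | succ n ih => rw [← ih, dyadicSum_succ n, sum_range_succ]; abel

end DyadicSum

lemma dyadicDefect_congr {S : Set ℝ} (hS : Convex ℝ S) {h h' : ℝ → ℝ → ℝ → V}
    (hh : ∀ a b c, a ∈ S → b ∈ S → c ∈ S → h a b c = h' a b c) {t s : ℝ} (ht : t ∈ S)
    (hs : s ∈ S) (n : ℕ) : dyadicDefect h t s n = dyadicDefect h' t s n := by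
  refine sum_congr rfl fun i hi => ?_
  have hi := mem_range.1 hi
  exact hh _ _ _ (dyadicPoint_mem hS ht hs (by omega))
    (dyadicPoint_mem hS ht hs (by rw [pow_succ]; omega)) (dyadicPoint_mem hS ht hs (by omega))

lemma norm_sum_range_two_pow_le {f : ℕ → V} {n : ℕ} {M : ℝ}
    (hf : ∀ i < 2 ^ n, ‖f i‖ ≤ M) : ‖∑ i ∈ range (2 ^ n), f i‖ ≤ 2 ^ n * M :=
  (norm_sum_le_of_le _ fun i hi => hf i (mem_range.1 hi)).trans_eq (by simp)

lemma norm_dyadicSum_le {S : Set ℝ} (hS : Convex ℝ S) {ψ : ℝ → ℝ → V} {K ν : ℝ}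
    (hψ : ∀ a b, a ∈ S → b ∈ S → ‖ψ a b‖ ≤ K * |a - b| ^ ν) {t s : ℝ} (ht : t ∈ S)
    (hs : s ∈ S) (n : ℕ) : ‖dyadicSum ψ t s n‖ ≤ K * |t - s| ^ ν * ((2 : ℝ) ^ (1 - ν)) ^ n := by
  refine (norm_sum_range_two_pow_le
    (M := K * (|t - s| / 2 ^ n) ^ ν) fun i hi => ?_).trans_eq ?_
  · refine (hψ _ _ (dyadicPoint_mem hS ht hs (by omega))
      (dyadicPoint_mem hS ht hs hi.le)).trans_eq ?_
    rw [dyadicPoint_succ_sub, abs_div, abs_of_pos (by positivity : (0 : ℝ) < 2 ^ n)]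
  · rw [mul_left_comm, two_pow_mul_div_two_pow_rpow (abs_nonneg _), mul_assoc]

lemma IsControlledOn.norm_dyadicDefect_le {S : Set ℝ} {C μ : ℝ} {h : ℝ → ℝ → ℝ → V}
    (hh : IsControlledOn S C μ h) (hS : Convex ℝ S) {t s : ℝ} (ht : t ∈ S) (hs : s ∈ S)
    (n : ℕ) : ‖dyadicDefect h t s n‖ ≤ C * (|t - s| / 2) ^ μ * ((2 : ℝ) ^ (1 - μ)) ^ n := by
  refine (norm_sum_range_two_pow_le
    (M := C * (|t - s| / 2 / 2 ^ n) ^ μ) fun i hi => ?_).trans_eq ?_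
  · refine (hh _ _ _ (dyadicPoint_mem hS ht hs (by omega))
      (dyadicPoint_mem hS ht hs (by rw [pow_succ]; omega))
      (dyadicPoint_mem hS ht hs (by omega))).trans_eq ?_
    rw [dyadicPoint_succ_sub_midpoint, dyadicPoint_midpoint_sub, max_self, abs_div,
      abs_of_pos (by positivity : (0 : ℝ) < 2 ^ (n + 1)), pow_succ', ← div_div]
  · rw [mul_left_comm, two_pow_mul_div_two_pow_rpow (by positivity), mul_assoc]

section Uniqueness

variable {S : Set ℝ} {h : ℝ → ℝ → ℝ → V} {C μ : ℝ} {t s : ℝ}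

lemma hasSum_dyadicDefect (hS : Convex ℝ S) (hh : IsControlledOn S C μ h) (hμ : 1 < μ)
    {ψ : ℝ → ℝ → V} {K ν : ℝ} (hν : 1 < ν)
    (hψ : ∀ a b, a ∈ S → b ∈ S → ‖ψ a b‖ ≤ K * |a - b| ^ ν)
    (hψh : ∀ a b c, a ∈ S → b ∈ S → c ∈ S → h a b c = coboundary ψ a b c) (ht : t ∈ S)
    (hs : s ∈ S) : HasSum (dyadicDefect h t s) (ψ t s) := by
  have hsum : Summable fun m => ‖dyadicDefect h t s m‖ :=
    .of_nonneg_of_le (fun _ => norm_nonneg _) (hh.norm_dyadicDefect_le hS ht hs)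
      ((summable_geometric_of_lt_one (by positivity) (two_pow_one_sub_lt_one hμ)).mul_left _)
  rw [hasSum_iff_tendsto_nat_of_summable_norm hsum]
  have hlim : Tendsto (fun n => ψ t s - dyadicSum ψ t s n) atTop (𝓝 (ψ t s)) := by
    simpa using tendsto_const_nhds.sub (squeeze_zero_norm (norm_dyadicSum_le hS hψ ht hs)
      (by simpa using (tendsto_pow_atTop_nhds_zero_of_lt_one (by positivity)
        (two_pow_one_sub_lt_one hν)).const_mul (K * |t - s| ^ ν)))
  refine hlim.congr fun n => ?_
  rw [← dyadicSum_add_sum_dyadicDefect (ψ := ψ) (t := t) (s := s) n, add_sub_cancel_left]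
  exact sum_congr rfl fun m _ => (dyadicDefect_congr hS hψh ht hs m).symm

theorem eq_of_isControlledOn (hS : Convex ℝ S) (hh : IsControlledOn S C μ h) (hμ : 1 < μ)
    {ψ₁ ψ₂ : ℝ → ℝ → V} {K₁ K₂ ν₁ ν₂ : ℝ} (hν₁ : 1 < ν₁) (hν₂ : 1 < ν₂)
    (hψ₁ : ∀ a b, a ∈ S → b ∈ S → ‖ψ₁ a b‖ ≤ K₁ * |a - b| ^ ν₁)
    (hψ₂ : ∀ a b, a ∈ S → b ∈ S → ‖ψ₂ a b‖ ≤ K₂ * |a - b| ^ ν₂)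
    (hψ₁h : ∀ a b c, a ∈ S → b ∈ S → c ∈ S → h a b c = coboundary ψ₁ a b c)
    (hψ₂h : ∀ a b c, a ∈ S → b ∈ S → c ∈ S → h a b c = coboundary ψ₂ a b c)
    (ht : t ∈ S) (hs : s ∈ S) : ψ₁ t s = ψ₂ t s :=
  (hasSum_dyadicDefect hS hh hμ hν₁ hψ₁ hψ₁h ht hs).unique
    (hasSum_dyadicDefect hS hh hμ hν₂ hψ₂ hψ₂h ht hs)

theorem norm_le_of_isControlledOn (hS : Convex ℝ S) (hh : IsControlledOn S C μ h)
    (hμ : 1 < μ) {ψ : ℝ → ℝ → V} {K ν : ℝ} (hν : 1 < ν)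
    (hψ : ∀ a b, a ∈ S → b ∈ S → ‖ψ a b‖ ≤ K * |a - b| ^ ν)
    (hψh : ∀ a b c, a ∈ S → b ∈ S → c ∈ S → h a b c = coboundary ψ a b c) (ht : t ∈ S)
    (hs : s ∈ S) : ‖ψ t s‖ ≤ ((2 : ℝ) ^ μ - 2)⁻¹ * C * |t - s| ^ μ := by
  refine ((hasSum_dyadicDefect hS hh hμ hν hψ hψh ht hs).norm_le_of_bounded
    ((hasSum_geometric_of_lt_one (by positivity) (two_pow_one_sub_lt_one hμ)).mul_left _)
    (hh.norm_dyadicDefect_le hS ht hs)).trans_eq ?_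
  rw [Real.div_rpow (abs_nonneg _) zero_le_two, Real.rpow_sub zero_lt_two, Real.rpow_one]
  field_simp

end Uniqueness

lemma abs_min_sub_min_left_le (a b c : ℝ) : |min a b - min a c| ≤ |b - c| := by
  simpa using abs_min_sub_min_le_max a b a c

lemma abs_min_sub_min_right_le (a b c : ℝ) : |min a c - min b c| ≤ |a - b| := by
  simpa using abs_min_sub_min_le_max a c b c

lemma min_mem_Icc {T t a : ℝ} (ht : t ∈ Icc 0 T) (ha : 0 ≤ a) : min t a ∈ Icc 0 T :=
  ⟨le_min ht.1 ha, (min_le_left _ _).trans ht.2⟩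

lemma self_eq_zero_of_isControlledOn {S : Set ℝ} {C μ : ℝ} {ψ : ℝ → ℝ → V}
    (hψ : IsControlledOn S C μ (coboundary ψ)) (hμ : 0 < μ) {a : ℝ} (ha : a ∈ S) :
    ψ a a = 0 := by
  simpa [coboundary, Real.zero_rpow hμ.ne'] using hψ a a a ha ha ha

def clamp (ψ : ℝ → ℝ → V) (t : ℝ) : ℝ → ℝ → V := fun a b => ψ (min t a) (min t b)

section Clamp

variable {ψ : ℝ → ℝ → V} {t a b c : ℝ}

lemma coboundary_clamp_of_le (ha : a ≤ t) (hb : b ≤ t) (hc : c ≤ t) :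
    coboundary (clamp ψ t) a b c = coboundary ψ a b c := by
  simp [coboundary, clamp, ha, hb, hc]

lemma coboundary_clamp_of_ge (ha : t ≤ a) (hb : t ≤ b) (hc : t ≤ c) :
    coboundary (clamp ψ t) a b c = -ψ t t := by
  simp [coboundary, clamp, ha, hb, hc]

lemma IsControlledOn.clamp {T C μ : ℝ} (hψ : IsControlledOn (Icc 0 T) C μ (coboundary ψ))
    (hC : 0 ≤ C) (hμ : 0 ≤ μ) (ht : t ∈ Icc 0 T) :
    IsControlledOn (Icc 0 T) C μ (coboundary (clamp ψ t)) := by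
  intro a b c ha hb hc
  refine (hψ _ _ _ (min_mem_Icc ht ha.1) (min_mem_Icc ht hb.1) (min_mem_Icc ht hc.1)).trans ?_
  exact mul_le_mul_of_nonneg_left (Real.rpow_le_rpow (by positivity)
    (max_le_max (abs_min_sub_min_left_le ..) (abs_min_sub_min_left_le ..)) hμ) hC

end Clamp

/-- By `gridPrimitive_eq`, this is the limit of the Riemann sums `dyadicSum (clamp ψ t) T 0 n`
of `ψ` over the level-`n` dyadic grid of `[0, T]` stopped at `t`. -/
def gridPrimitive (ψ : ℝ → ℝ → V) (T t : ℝ) : V :=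
  ψ t 0 - ∑' m, dyadicDefect (coboundary (clamp ψ t)) T 0 m

def sewnPrimitive (ψ : ℝ → ℝ → V) (T t s : ℝ) : V :=
  ψ t s - gridPrimitive ψ T t + gridPrimitive ψ T s

lemma coboundary_sewnPrimitive (ψ : ℝ → ℝ → V) (T t u s : ℝ) :
    coboundary (sewnPrimitive ψ T) t u s = coboundary ψ t u s := by
  simp only [coboundary, sewnPrimitive]; abel

lemma sewnPrimitive_self (ψ : ℝ → ℝ → V) (T t : ℝ) : sewnPrimitive ψ T t t = ψ t t := by
  simp [sewnPrimitive]

section Existence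

variable {ψ : ℝ → ℝ → V} {T C μ t s : ℝ}

lemma norm_dyadicDefect_clamp_le (hψ : IsControlledOn (Icc 0 T) C μ (coboundary ψ))
    (hC : 0 ≤ C) (hμ : 0 ≤ μ) (ht : t ∈ Icc 0 T) (m : ℕ) :
    ‖dyadicDefect (coboundary (clamp ψ t)) T 0 m‖
      ≤ C * (T / 2) ^ μ * ((2 : ℝ) ^ (1 - μ)) ^ m := by
  have hT : 0 ≤ T := ht.1.trans ht.2
  simpa [abs_of_nonneg hT] using (hψ.clamp hC hμ ht).norm_dyadicDefect_le (convex_Icc 0 T)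
    (right_mem_Icc.2 hT) (left_mem_Icc.2 hT) m

lemma summable_dyadicDefect_clamp [CompleteSpace V]
    (hψ : IsControlledOn (Icc 0 T) C μ (coboundary ψ)) (hC : 0 ≤ C) (hμ : 1 < μ)
    (ht : t ∈ Icc 0 T) : Summable (dyadicDefect (coboundary (clamp ψ t)) T 0) :=
  .of_norm_bounded ((summable_geometric_of_lt_one (by positivity)
    (two_pow_one_sub_lt_one hμ)).mul_left _) (norm_dyadicDefect_clamp_le hψ hC (by linarith) ht)

lemma gridPrimitive_eq [CompleteSpace V] (hψ : IsControlledOn (Icc 0 T) C μ (coboundary ψ))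
    (hC : 0 ≤ C) (hμ : 1 < μ) (ht : t ∈ Icc 0 T) (N : ℕ) :
    gridPrimitive ψ T t = dyadicSum (clamp ψ t) T 0 N
      - ∑' k, dyadicDefect (coboundary (clamp ψ t)) T 0 (k + N) := by
  have hgrid := dyadicSum_add_sum_dyadicDefect (ψ := clamp ψ t) (t := T) (s := 0) N
  rw [clamp, min_eq_left ht.2, min_eq_right ht.1] at hgrid
  rw [gridPrimitive, ← (summable_dyadicDefect_clamp hψ hC hμ ht).sum_add_tsum_nat_add N,
    ← hgrid]
  abel


lemma coboundary_clamp_eq_of_le_or_ge {t s p q r : ℝ} (ht : ψ t t = 0) (hs : ψ s s = 0)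
    (hpq : p ≤ q) (hqr : q ≤ r) (hout : r ≤ min t s ∨ max t s ≤ p) :
    coboundary (clamp ψ t) r q p = coboundary (clamp ψ s) r q p := by
  rcases hout with h | h
  · rw [coboundary_clamp_of_le, coboundary_clamp_of_le] <;>
      linarith [min_le_left t s, min_le_right t s]
  · rw [coboundary_clamp_of_ge, coboundary_clamp_of_ge, ht, hs] <;>
      linarith [le_max_left t s, le_max_right t s]

lemma coboundary_min_eq_of_le_or_ge {t s x x' : ℝ} (hxx' : x ≤ x') (ht : ψ t t = 0)
    (hs : ψ s s = 0) (hx : ψ x x = 0) (hx' : ψ x' x' = 0) (hout : x' ≤ min t s ∨ max t s ≤ x) :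
    coboundary ψ (min t x') (min t x) (min s x) = coboundary ψ (min t x') (min s x') (min s x) := by
  rcases hout with h | h
  · have htx : x' ≤ t := h.trans (min_le_left _ _)
    have hsx : x' ≤ s := h.trans (min_le_right _ _)
    simp [coboundary, htx, hsx, hxx'.trans htx, hxx'.trans hsx, hx, hx']
  · have htx : t ≤ x := (le_max_left _ _).trans h
    have hsx : s ≤ x := (le_max_right _ _).trans h
    simp [coboundary, htx, hsx, htx.trans hxx', hsx.trans hxx', ht, hs]

lemma sum_range_coboundary_min_sub {t s : ℝ} {x : ℕ → ℝ} {n : ℕ} (h₀ : x 0 ≤ min t s)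
    (hn : max t s ≤ x n) (hψ₀ : ψ (x 0) (x 0) = 0) :
    ∑ i ∈ range n, (coboundary ψ (min t (x (i + 1))) (min t (x i)) (min s (x i))
        - coboundary ψ (min t (x (i + 1))) (min s (x (i + 1))) (min s (x i)))
      = ψ t s - ∑ i ∈ range n, clamp ψ t (x (i + 1)) (x i)
        + ∑ i ∈ range n, clamp ψ s (x (i + 1)) (x i) := by
  have htele := sum_range_sub (fun j => ψ (min t (x j)) (min s (x j))) n
  rw [min_eq_left ((le_max_left t s).trans hn), min_eq_left ((le_max_right t s).trans hn),
    min_eq_right (h₀.trans (min_le_left t s)), min_eq_right (h₀.trans (min_le_right t s)), hψ₀,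
    sub_zero] at htele
  rw [← htele, ← sum_sub_distrib, ← sum_add_distrib]
  refine sum_congr rfl fun i _ => ?_
  simp only [coboundary, clamp]
  abel

lemma norm_dyadicDefect_clamp_sub_le (hψ : IsControlledOn (Icc 0 T) C μ (coboundary ψ))
    (hC : 0 ≤ C) (hμ : 0 < μ) (hT : 0 < T) (ht : t ∈ Icc 0 T) (hs : s ∈ Icc 0 T) (m : ℕ) :
    ‖dyadicDefect (coboundary (clamp ψ t)) T 0 m - dyadicDefect (coboundary (clamp ψ s)) T 0 m‖
      ≤ (|t - s| / (T / 2 ^ m) + 2) * (2 * (C * (T / 2 ^ m) ^ μ)) := by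
  have hmem : ∀ {n j : ℕ}, j ≤ 2 ^ n → dyadicPoint T 0 n j ∈ Icc 0 T := fun hj =>
    dyadicPoint_mem (convex_Icc 0 T) (right_mem_Icc.2 hT.le) (left_mem_Icc.2 hT.le) hj
  have hhalf : 0 ≤ (T - 0) / 2 ^ (m + 1) := by rw [sub_zero]; positivity
  rw [dyadicDefect, dyadicDefect, ← sum_sub_distrib]
  refine (norm_sum_range_le_of_support (c := T / 2 ^ m) (M := 2 * (C * (T / 2 ^ m) ^ μ))
    (by positivity) (le_min ht.1 hs.1) min_le_max (by positivity) (fun i hi => ?_)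
    (fun i hi hne => ?_)).trans_eq (by rw [max_sub_min_eq_abs'])
  · have hterm : ∀ u ∈ Icc 0 T, ‖coboundary (clamp ψ u) (dyadicPoint T 0 m (i + 1))
        (dyadicPoint T 0 (m + 1) (2 * i + 1)) (dyadicPoint T 0 m i)‖ ≤ C * (T / 2 ^ m) ^ μ := by
      intro u hu
      refine ((hψ.clamp hC hμ.le hu) _ _ _ (hmem (by omega)) (hmem (by rw [pow_succ]; omega))
        (hmem (by omega))).trans ?_
      rw [dyadicPoint_succ_sub_midpoint, dyadicPoint_midpoint_sub, max_self, sub_zero,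
        abs_of_nonneg (by positivity)]
      gcongr
      · exact one_le_two
      · omega
    exact (norm_sub_le _ _).trans (by linarith [hterm t ht, hterm s hs])
  · refine not_not.1 fun hin => hne (sub_eq_zero.2 (coboundary_clamp_eq_of_le_or_ge
      (self_eq_zero_of_isControlledOn hψ hμ ht) (self_eq_zero_of_isControlledOn hψ hμ hs)
      (by linarith [dyadicPoint_midpoint_sub (t := T) (s := 0) (n := m) (i := i)])
      (by linarith [dyadicPoint_succ_sub_midpoint (t := T) (s := 0) (n := m) (i := i)]) ?_))
    rw [not_and_or, not_lt, not_lt] at hin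
    rwa [dyadicPoint_zero_right, dyadicPoint_zero_right, Nat.cast_succ]

lemma norm_sub_dyadicSum_clamp_add_le (hψ : IsControlledOn (Icc 0 T) C μ (coboundary ψ))
    (hC : 0 ≤ C) (hμ : 0 < μ) (hT : 0 < T) (ht : t ∈ Icc 0 T) (hs : s ∈ Icc 0 T) {N : ℕ}
    (hts : |t - s| ≤ T / 2 ^ N) :
    ‖ψ t s - dyadicSum (clamp ψ t) T 0 N + dyadicSum (clamp ψ s) T 0 N‖
      ≤ (|t - s| / (T / 2 ^ N) + 2) * (2 * (C * (T / 2 ^ N) ^ μ)) := by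
  have hdiag : ∀ a ∈ Icc 0 T, ψ a a = 0 := fun a ha => self_eq_zero_of_isControlledOn hψ hμ ha
  have hmem : ∀ {j : ℕ}, j ≤ 2 ^ N → dyadicPoint T 0 N j ∈ Icc 0 T := fun hj =>
    dyadicPoint_mem (convex_Icc 0 T) (right_mem_Icc.2 hT.le) (left_mem_Icc.2 hT.le) hj
  rw [dyadicSum, dyadicSum, ← sum_range_coboundary_min_sub (by simp [ht.1, hs.1])
    (by simp [ht.2, hs.2]) (by simpa using hdiag 0 (left_mem_Icc.2 hT.le))]
  refine (norm_sum_range_le_of_support (c := T / 2 ^ N) (M := 2 * (C * (T / 2 ^ N) ^ μ))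
    (by positivity) (le_min ht.1 hs.1) min_le_max (by positivity) (fun i hi => ?_)
    (fun i hi hne => ?_)).trans_eq (by rw [max_sub_min_eq_abs'])
  · have hgap : ∀ u, |min u (dyadicPoint T 0 N (i + 1)) - min u (dyadicPoint T 0 N i)|
        ≤ T / 2 ^ N := fun u => (abs_min_sub_min_left_le _ _ _).trans_eq
      (by rw [dyadicPoint_succ_sub, sub_zero, abs_of_nonneg (by positivity)])
    have hts' : ∀ j, |min t (dyadicPoint T 0 N j) - min s (dyadicPoint T 0 N j)| ≤ T / 2 ^ N :=
      fun j => (abs_min_sub_min_right_le _ _ _).trans hts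
    have hbound : ∀ {a b c : ℝ}, a ∈ Icc 0 T → b ∈ Icc 0 T → c ∈ Icc 0 T →
        |a - b| ≤ T / 2 ^ N → |b - c| ≤ T / 2 ^ N →
        ‖coboundary ψ a b c‖ ≤ C * (T / 2 ^ N) ^ μ := fun ha hb hc hab hbc =>
      (hψ _ _ _ ha hb hc).trans (mul_le_mul_of_nonneg_left
        (Real.rpow_le_rpow (by positivity) (max_le hab hbc) hμ.le) hC)
    have hx₁ := (hmem (j := i + 1) (by omega)).1
    have hx₀ := (hmem (j := i) (by omega)).1
    have h₁ := hbound (min_mem_Icc ht hx₁) (min_mem_Icc ht hx₀) (min_mem_Icc hs hx₀)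
      (hgap t) (hts' i)
    have h₂ := hbound (min_mem_Icc ht hx₁) (min_mem_Icc hs hx₁) (min_mem_Icc hs hx₀)
      (hts' (i + 1)) (hgap s)
    exact (norm_sub_le _ _).trans (by linarith)
  · refine not_not.1 fun hin => hne (sub_eq_zero.2 (coboundary_min_eq_of_le_or_ge
      (by linarith [dyadicPoint_succ_sub (t := T) (s := 0) (n := N) (i := i),
        (by rw [sub_zero]; positivity : 0 ≤ (T - 0) / 2 ^ N)])
      (hdiag t ht) (hdiag s hs) (hdiag _ (hmem (by omega))) (hdiag _ (hmem (by omega))) ?_))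
    rw [not_and_or, not_lt, not_lt] at hin
    rwa [dyadicPoint_zero_right, dyadicPoint_zero_right, Nat.cast_succ]

lemma div_add_two_mul_rpow_le {d e C μ : ℝ} (hd : 0 ≤ d) (hde : d ≤ e) (hC : 0 ≤ C)
    (k : ℕ) : (d / (e / 2 ^ k) + 2) * (2 * (C * (e / 2 ^ k) ^ μ))
      ≤ 6 * C * e ^ μ * ((2 : ℝ) ^ (1 - μ)) ^ k := by
  have he : 0 ≤ e := hd.trans hde
  have hcount : d / (e / 2 ^ k) + 2 ≤ 3 * 2 ^ k := by
    have h1 : (1 : ℝ) ≤ 2 ^ k := one_le_pow₀ one_le_two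
    rcases he.eq_or_lt with rfl | he
    · rw [zero_div, div_zero, zero_add]; linarith
    have : d / (e / 2 ^ k) ≤ 2 ^ k := by
      rw [div_div_eq_mul_div, div_le_iff₀ he]; nlinarith
    linarith
  calc (d / (e / 2 ^ k) + 2) * (2 * (C * (e / 2 ^ k) ^ μ))
      ≤ 3 * 2 ^ k * (2 * (C * (e / 2 ^ k) ^ μ)) := by gcongr
    _ = 6 * C * (2 ^ k * (e / 2 ^ k) ^ μ) := by ring
    _ = 6 * C * e ^ μ * ((2 : ℝ) ^ (1 - μ)) ^ k := by
        rw [two_pow_mul_div_two_pow_rpow he]; ring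

lemma norm_sewnPrimitive_le_of_le [CompleteSpace V]
    (hψ : IsControlledOn (Icc 0 T) C μ (coboundary ψ))
    (hC : 0 ≤ C) (hμ : 1 < μ) (hT : 0 < T) (ht : t ∈ Icc 0 T) (hs : s ∈ Icc 0 T) {N : ℕ}
    (hts : |t - s| ≤ T / 2 ^ N) :
    ‖sewnPrimitive ψ T t s‖ ≤ 6 * C * (T / 2 ^ N) ^ μ * (1 + (1 - (2 : ℝ) ^ (1 - μ))⁻¹) := by
  have hμ₀ : 0 < μ := by linarith
  have hsum : ∀ {u}, u ∈ Icc 0 T →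
      Summable fun k => dyadicDefect (coboundary (clamp ψ u)) T 0 (k + N) := fun hu =>
    (summable_nat_add_iff N).2 (summable_dyadicDefect_clamp hψ hC hμ hu)
  have hsplit : sewnPrimitive ψ T t s
      = (ψ t s - dyadicSum (clamp ψ t) T 0 N + dyadicSum (clamp ψ s) T 0 N)
        + ∑' k, (dyadicDefect (coboundary (clamp ψ t)) T 0 (k + N)
          - dyadicDefect (coboundary (clamp ψ s)) T 0 (k + N)) := by
    rw [sewnPrimitive, gridPrimitive_eq hψ hC hμ ht N, gridPrimitive_eq hψ hC hμ hs N,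
      (hsum ht).tsum_sub (hsum hs)]
    abel
  have hhead := (norm_sub_dyadicSum_clamp_add_le hψ hC hμ₀ hT ht hs hts).trans
    (by simpa using div_add_two_mul_rpow_le (abs_nonneg _) hts hC 0)
  have htail := tsum_of_norm_bounded ((hasSum_geometric_of_lt_one (by positivity)
    (two_pow_one_sub_lt_one hμ)).mul_left (6 * C * (T / 2 ^ N) ^ μ)) fun k => by
      have hcell : T / 2 ^ (k + N) = T / 2 ^ N / 2 ^ k := by rw [pow_add, div_div, mul_comm]
      refine (norm_dyadicDefect_clamp_sub_le hψ hC hμ₀ hT ht hs (k + N)).trans ?_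
      rw [hcell]
      exact div_add_two_mul_rpow_le (abs_nonneg _) hts hC k
  rw [hsplit]
  refine (norm_add_le _ _).trans ?_
  linarith

theorem exists_norm_sewnPrimitive_le [CompleteSpace V]
    (hψ : IsControlledOn (Icc 0 T) C μ (coboundary ψ)) (hC : 0 ≤ C) (hμ : 1 < μ) :
    ∃ K : ℝ, ∀ t s, t ∈ Icc 0 T → s ∈ Icc 0 T → ‖sewnPrimitive ψ T t s‖ ≤ K * |t - s| ^ μ := by
  have hθ : 0 ≤ 1 + (1 - (2 : ℝ) ^ (1 - μ))⁻¹ := by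
    have := two_pow_one_sub_lt_one hμ
    have : 0 ≤ (1 - (2 : ℝ) ^ (1 - μ))⁻¹ := inv_nonneg.2 (by linarith)
    linarith
  refine ⟨6 * C * (1 + (1 - (2 : ℝ) ^ (1 - μ))⁻¹) * 2 ^ μ, fun t s ht hs => ?_⟩
  rcases eq_or_ne t s with rfl | hne
  · rw [sewnPrimitive_self, self_eq_zero_of_isControlledOn hψ (by linarith) ht, norm_zero, sub_self,
      abs_zero, Real.zero_rpow (by linarith), mul_zero]
  have hd : 0 < |t - s| := abs_pos.2 (sub_ne_zero.2 hne)
  have hdT : |t - s| ≤ T := abs_sub_le_iff.2 ⟨by linarith [ht.2, hs.1], by linarith [ht.1, hs.2]⟩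
  obtain ⟨N, hN₁, hN₂⟩ := exists_nat_pow_near ((one_le_div hd).2 hdT) one_lt_two
  have h₁ : |t - s| ≤ T / 2 ^ N := by
    rw [le_div_iff₀ hd] at hN₁; rw [le_div_iff₀ (by positivity)]; linarith
  have h₂ : T / 2 ^ N ≤ 2 * |t - s| := by
    rw [div_lt_iff₀ hd, pow_succ] at hN₂; rw [div_le_iff₀ (by positivity)]; linarith
  calc ‖sewnPrimitive ψ T t s‖ ≤ 6 * C * (T / 2 ^ N) ^ μ * (1 + (1 - (2 : ℝ) ^ (1 - μ))⁻¹) :=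
        norm_sewnPrimitive_le_of_le hψ hC hμ (hd.trans_le hdT) ht hs h₁
    _ ≤ 6 * C * (2 * |t - s|) ^ μ * (1 + (1 - (2 : ℝ) ^ (1 - μ))⁻¹) := by
        gcongr; exact div_nonneg (hd.trans_le hdT).le (by positivity)
    _ = _ := by rw [Real.mul_rpow zero_le_two (abs_nonneg _)]; ring

lemma continuousOn_clamp_apply
    (hcont : ContinuousOn (fun p : ℝ × ℝ => ψ p.1 p.2) (Icc 0 T ×ˢ Icc 0 T)) {a b : ℝ}
    (ha : 0 ≤ a) (hb : 0 ≤ b) : ContinuousOn (fun t => clamp ψ t a b) (Icc 0 T) :=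
  hcont.comp ((continuous_id.min continuous_const).prodMk
    (continuous_id.min continuous_const)).continuousOn
    fun _ ht => ⟨min_mem_Icc ht ha, min_mem_Icc ht hb⟩

lemma continuousOn_gridPrimitive [CompleteSpace V]
    (hcont : ContinuousOn (fun p : ℝ × ℝ => ψ p.1 p.2) (Icc 0 T ×ˢ Icc 0 T))
    (hψ : IsControlledOn (Icc 0 T) C μ (coboundary ψ)) (hC : 0 ≤ C) (hμ : 1 < μ) :
    ContinuousOn (gridPrimitive ψ T) (Icc 0 T) := by
  intro t ht
  have hT : 0 ≤ T := ht.1.trans ht.2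
  have hpt : ∀ n j, 0 ≤ dyadicPoint T 0 n j := fun n j => by
    rw [dyadicPoint_zero_right]; positivity
  refine ContinuousOn.sub (hcont.comp (continuous_id.prodMk continuous_const).continuousOn
    fun _ hu => ⟨hu, left_mem_Icc.2 hT⟩) (continuousOn_tsum (fun m => ?_)
    ((summable_geometric_of_lt_one (by positivity) (two_pow_one_sub_lt_one hμ)).mul_left _)
    fun m u hu => norm_dyadicDefect_clamp_le hψ hC (by linarith) hu m) t ht
  exact continuousOn_finsetSum _ fun i _ =>
    (((continuousOn_clamp_apply hcont (hpt _ _) (hpt _ _)).sub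
      (continuousOn_clamp_apply hcont (hpt _ _) (hpt _ _))).sub
      (continuousOn_clamp_apply hcont (hpt _ _) (hpt _ _)))

theorem continuousOn_sewnPrimitive [CompleteSpace V]
    (hcont : ContinuousOn (fun p : ℝ × ℝ => ψ p.1 p.2) (Icc 0 T ×ˢ Icc 0 T))
    (hψ : IsControlledOn (Icc 0 T) C μ (coboundary ψ)) (hC : 0 ≤ C) (hμ : 1 < μ) :
    ContinuousOn (fun p : ℝ × ℝ => sewnPrimitive ψ T p.1 p.2) (Icc 0 T ×ˢ Icc 0 T) :=
  have hG := continuousOn_gridPrimitive hcont hψ hC hμ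
  (hcont.sub (hG.comp continuousOn_fst fun _ hp => hp.1)).add
    (hG.comp continuousOn_snd fun _ hp => hp.2)

end Existence

lemma isControlledOn_of_decomposition {S : Set ℝ} {μ : ℝ} {h : ℝ → ℝ → ℝ → V} {N : ℕ}
    {hdec : Fin N → ℝ → ℝ → ℝ → V} {C ρ : Fin N → ℝ} (hC : ∀ k, 0 ≤ C k)
    (hρ : ∀ k, ρ k ∈ Ioo 0 μ)
    (hsum : ∀ t u s, t ∈ S → u ∈ S → s ∈ S → h t u s = ∑ k, hdec k t u s)
    (hb : ∀ k, ∀ t u s, t ∈ S → u ∈ S → s ∈ S →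
      ‖hdec k t u s‖ ≤ C k * |t - u| ^ (ρ k) * |u - s| ^ (μ - ρ k)) :
    IsControlledOn S (∑ k, C k) μ h := by
  intro a b c ha hb' hc
  rw [hsum a b c ha hb' hc, sum_mul]
  refine (norm_sum_le _ _).trans (sum_le_sum fun k _ => (hb k a b c ha hb' hc).trans ?_)
  obtain ⟨hρ₀, hρμ⟩ := hρ k
  have := hC k
  calc C k * |a - b| ^ ρ k * |b - c| ^ (μ - ρ k)
      ≤ C k * max |a - b| |b - c| ^ ρ k * max |a - b| |b - c| ^ (μ - ρ k) := by
        gcongr <;> first | exact le_max_left _ _ | exact le_max_right _ _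
    _ = C k * max |a - b| |b - c| ^ μ := by
        rw [mul_assoc, ← Real.rpow_add' (by positivity) (by linarith), add_sub_cancel]

lemma coboundary_neg_eq_of_cocycle {S : Set ℝ} {h : ℝ → ℝ → ℝ → V}
    (hcocycle : ∀ a b c d, a ∈ S → b ∈ S → c ∈ S → d ∈ S →
      h b c d - h a c d + h a b d - h a b c = 0) {p a b c : ℝ} (hp : p ∈ S) (ha : a ∈ S)
    (hb : b ∈ S) (hc : c ∈ S) : coboundary (fun x y => -h x y p) a b c = h a b c := by
  have := hcocycle a b c p ha hb hc hp
  simp only [coboundary]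
  linear_combination (norm := abel) this

end Sewing

end

open Sewing

theorem stmt5_general
    {V : Type*} [NormedAddCommGroup V] [CompleteSpace V]
    (T : ℝ) (μ : ℝ) (hμ : 1 < μ)
    (h : ℝ → ℝ → ℝ → V)
    (hcont : ContinuousOn (fun p : ℝ × ℝ × ℝ => h p.1 p.2.1 p.2.2)
      (Icc 0 T ×ˢ Icc 0 T ×ˢ Icc 0 T))
    (hcocycle : ∀ a b c d, a ∈ Icc 0 T → b ∈ Icc 0 T → c ∈ Icc 0 T → d ∈ Icc 0 T →
      h b c d - h a c d + h a b d - h a b c = 0)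
    -- `‖h‖_μ < ∞`: existence of one finite decomposition
    (hfin : ∃ (N : ℕ) (hdec : Fin N → ℝ → ℝ → ℝ → V) (C ρ : Fin N → ℝ),
      (∀ k, 0 ≤ C k) ∧ (∀ k, ρ k ∈ Set.Ioo (0:ℝ) μ) ∧
      (∀ t u s, t ∈ Icc 0 T → u ∈ Icc 0 T → s ∈ Icc 0 T →
        h t u s = ∑ k, hdec k t u s) ∧
      (∀ k, ∀ t u s, t ∈ Icc 0 T → u ∈ Icc 0 T → s ∈ Icc 0 T →
        ‖hdec k t u s‖ ≤ C k * |t - u| ^ (ρ k) * |u - s| ^ (μ - ρ k))) :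
    ∃ r : ℝ → ℝ → V,
      -- r ∈ 𝒞₂(V)
      (ContinuousOn (fun p : ℝ × ℝ => r p.1 p.2) (Icc 0 T ×ˢ Icc 0 T) ∧
        ∀ t ∈ Icc 0 T, r t t = 0) ∧
      -- δr = h
      (∀ t u s, t ∈ Icc 0 T → u ∈ Icc 0 T → s ∈ Icc 0 T →
        h t u s = r t s - r t u - r u s) ∧
      -- ‖r‖_ν < ∞ for some ν > 1
      (∃ ν > (1:ℝ), ∃ K : ℝ, ∀ t s, t ∈ Icc 0 T → s ∈ Icc 0 T →
        ‖r t s‖ ≤ K * |t - s| ^ ν) ∧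
      -- ‖r‖_μ ≤ (2^μ - 2)⁻¹ ‖h‖_μ : the bound holds for every decomposition of h
      (∀ (N : ℕ) (hdec : Fin N → ℝ → ℝ → ℝ → V) (C ρ : Fin N → ℝ),
        (∀ k, 0 ≤ C k) → (∀ k, ρ k ∈ Set.Ioo (0:ℝ) μ) →
        (∀ t u s, t ∈ Icc 0 T → u ∈ Icc 0 T → s ∈ Icc 0 T →
          h t u s = ∑ k, hdec k t u s) →
        (∀ k, ∀ t u s, t ∈ Icc 0 T → u ∈ Icc 0 T → s ∈ Icc 0 T →
          ‖hdec k t u s‖ ≤ C k * |t - u| ^ (ρ k) * |u - s| ^ (μ - ρ k)) →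
        ∀ t s, t ∈ Icc 0 T → s ∈ Icc 0 T →
          ‖r t s‖ ≤ ((2:ℝ) ^ μ - 2)⁻¹ * (∑ k, C k) * |t - s| ^ μ) ∧
      -- uniqueness
      (∀ r' : ℝ → ℝ → V,
        (ContinuousOn (fun p : ℝ × ℝ => r' p.1 p.2) (Icc 0 T ×ˢ Icc 0 T) ∧
          ∀ t ∈ Icc 0 T, r' t t = 0) →
        (∀ t u s, t ∈ Icc 0 T → u ∈ Icc 0 T → s ∈ Icc 0 T →
          h t u s = r' t s - r' t u - r' u s) →
        (∃ ν > (1:ℝ), ∃ K : ℝ, ∀ t s, t ∈ Icc 0 T → s ∈ Icc 0 T →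
          ‖r' t s‖ ≤ K * |t - s| ^ ν) →
        ∀ t s, t ∈ Icc 0 T → s ∈ Icc 0 T → r' t s = r t s) := by
  obtain ⟨N, hdec, C, ρ, hC, hρ, hsum, hb⟩ := hfin
  have hh := isControlledOn_of_decomposition hC hρ hsum hb
  set ψ : ℝ → ℝ → V := fun a b => -h a b 0
  have hψh : ∀ a b c, a ∈ Icc 0 T → b ∈ Icc 0 T → c ∈ Icc 0 T → h a b c = coboundary ψ a b c :=
    fun a b c ha hb hc =>
      (coboundary_neg_eq_of_cocycle hcocycle (left_mem_Icc.2 (ha.1.trans ha.2)) ha hb hc).symm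
  have hψ : IsControlledOn (Icc 0 T) (∑ k, C k) μ (coboundary ψ) := fun a b c ha hb hc =>
    hψh a b c ha hb hc ▸ hh a b c ha hb hc
  have hψcont : ContinuousOn (fun p : ℝ × ℝ => ψ p.1 p.2) (Icc 0 T ×ˢ Icc 0 T) :=
    (hcont.comp (continuous_fst.prodMk (continuous_snd.prodMk continuous_const)).continuousOn
      fun p hp => ⟨hp.1, hp.2, left_mem_Icc.2 (hp.1.1.trans hp.1.2)⟩).neg
  have hCnonneg : 0 ≤ ∑ k, C k := sum_nonneg fun k _ => hC k
  obtain ⟨K, hK⟩ := exists_norm_sewnPrimitive_le hψ hCnonneg hμ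
  have hδ : ∀ t u s, t ∈ Icc 0 T → u ∈ Icc 0 T → s ∈ Icc 0 T →
      h t u s = sewnPrimitive ψ T t s - sewnPrimitive ψ T t u - sewnPrimitive ψ T u s :=
    fun t u s ht hu hs => (hψh t u s ht hu hs).trans (coboundary_sewnPrimitive ψ T t u s).symm
  refine ⟨sewnPrimitive ψ T, ⟨continuousOn_sewnPrimitive hψcont hψ hCnonneg hμ, fun t ht => ?_⟩, hδ,
    ⟨μ, hμ, K, hK⟩, fun N' hdec' C' ρ' hC' hρ' hsum' hb' t s ht hs => ?_,
    fun r' _ hδ' ⟨ν, hν, K', hK'⟩ t s ht hs => ?_⟩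
  · rw [sewnPrimitive_self]
    exact self_eq_zero_of_isControlledOn hψ (by linarith) ht
  · exact norm_le_of_isControlledOn (convex_Icc 0 T)
      (isControlledOn_of_decomposition hC' hρ' hsum' hb') hμ hμ hK hδ ht hs
  · exact eq_of_isControlledOn (convex_Icc 0 T) hh hμ hν hμ hK' hK hδ' hδ ht hs

/-- **One-dimensional sewing map.**
Let `V` be a Banach space, `T > 0` and `μ > 1`, and let `h ∈ 𝒞₃(V)` satisfy `δh = 0`
and `‖h‖_μ < ∞` (the latter being witnessed by a finite decomposition `h = Σ hdec k`
with `‖hdec k‖_{ρ k, μ - ρ k} ≤ C k`).  Then there exists a unique `r ∈ 𝒞₂(V)` such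
that `δr = h` and `‖r‖_ν < ∞` for some `ν > 1`; moreover this `r` satisfies
`‖r‖_μ ≤ (2^μ - 2)⁻¹ ‖h‖_μ` (expressed through arbitrary decompositions of `h`). -/
theorem stmt5
    {V : Type*} [NormedAddCommGroup V] [NormedSpace ℝ V] [CompleteSpace V]
    (T : ℝ) (hT : 0 < T) (μ : ℝ) (hμ : 1 < μ)
    (h : ℝ → ℝ → ℝ → V)
    (hcont : ContinuousOn (fun p : ℝ × ℝ × ℝ => h p.1 p.2.1 p.2.2)
      (Icc 0 T ×ˢ Icc 0 T ×ˢ Icc 0 T))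
    (hvanish : ∀ t u s, t ∈ Icc 0 T → u ∈ Icc 0 T → s ∈ Icc 0 T →
      (t = u ∨ u = s) → h t u s = 0)
    (hcocycle : ∀ a b c d, a ∈ Icc 0 T → b ∈ Icc 0 T → c ∈ Icc 0 T → d ∈ Icc 0 T →
      h b c d - h a c d + h a b d - h a b c = 0)
    -- `‖h‖_μ < ∞`: existence of one finite decomposition
    (hfin : ∃ (N : ℕ) (hdec : Fin N → ℝ → ℝ → ℝ → V) (C ρ : Fin N → ℝ),
      (∀ k, 0 ≤ C k) ∧ (∀ k, ρ k ∈ Set.Ioo (0:ℝ) μ) ∧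
      (∀ t u s, t ∈ Icc 0 T → u ∈ Icc 0 T → s ∈ Icc 0 T →
        h t u s = ∑ k, hdec k t u s) ∧
      (∀ k, ∀ t u s, t ∈ Icc 0 T → u ∈ Icc 0 T → s ∈ Icc 0 T →
        ‖hdec k t u s‖ ≤ C k * |t - u| ^ (ρ k) * |u - s| ^ (μ - ρ k))) :
    ∃ r : ℝ → ℝ → V,
      -- r ∈ 𝒞₂(V)
      (ContinuousOn (fun p : ℝ × ℝ => r p.1 p.2) (Icc 0 T ×ˢ Icc 0 T) ∧
        ∀ t ∈ Icc 0 T, r t t = 0) ∧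
      -- δr = h
      (∀ t u s, t ∈ Icc 0 T → u ∈ Icc 0 T → s ∈ Icc 0 T →
        h t u s = r t s - r t u - r u s) ∧
      -- ‖r‖_ν < ∞ for some ν > 1
      (∃ ν > (1:ℝ), ∃ K : ℝ, ∀ t s, t ∈ Icc 0 T → s ∈ Icc 0 T →
        ‖r t s‖ ≤ K * |t - s| ^ ν) ∧
      -- ‖r‖_μ ≤ (2^μ - 2)⁻¹ ‖h‖_μ : the bound holds for every decomposition of h
      (∀ (N : ℕ) (hdec : Fin N → ℝ → ℝ → ℝ → V) (C ρ : Fin N → ℝ),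
        (∀ k, 0 ≤ C k) → (∀ k, ρ k ∈ Set.Ioo (0:ℝ) μ) →
        (∀ t u s, t ∈ Icc 0 T → u ∈ Icc 0 T → s ∈ Icc 0 T →
          h t u s = ∑ k, hdec k t u s) →
        (∀ k, ∀ t u s, t ∈ Icc 0 T → u ∈ Icc 0 T → s ∈ Icc 0 T →
          ‖hdec k t u s‖ ≤ C k * |t - u| ^ (ρ k) * |u - s| ^ (μ - ρ k)) →
        ∀ t s, t ∈ Icc 0 T → s ∈ Icc 0 T →
          ‖r t s‖ ≤ ((2:ℝ) ^ μ - 2)⁻¹ * (∑ k, C k) * |t - s| ^ μ) ∧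
      -- uniqueness
      (∀ r' : ℝ → ℝ → V,
        (ContinuousOn (fun p : ℝ × ℝ => r' p.1 p.2) (Icc 0 T ×ˢ Icc 0 T) ∧
          ∀ t ∈ Icc 0 T, r' t t = 0) →
        (∀ t u s, t ∈ Icc 0 T → u ∈ Icc 0 T → s ∈ Icc 0 T →
          h t u s = r' t s - r' t u - r' u s) →
        (∃ ν > (1:ℝ), ∃ K : ℝ, ∀ t s, t ∈ Icc 0 T → s ∈ Icc 0 T →
          ‖r' t s‖ ≤ K * |t - s| ^ ν) →
        ∀ t s, t ∈ Icc 0 T → s ∈ Icc 0 T → r' t s = r t s) :=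
  stmt5_general T μ hμ h hcont hcocycle hfin
end

section
/- Let V be a Banach space, T > 0 and k ≥ 2, and let a ∈ 𝒞𝒞_{k,k}(V) satisfy δa = 0. Define σ₁ and σ₂ by fixing the first argument of the first (respectively second) group of variables to 0: (σ₁g)((s₁,…,s_{j−1}),τ) = g((0,s₁,…,s_{j−1}),τ) for g ∈ 𝒞𝒞_{j,l}(V), and symmetrically for σ₂, and set σ = σ₁σ₂. Then there exists q ∈ 𝒞𝒞_{k−1,k−1}(V) such that a = δq + δ₁(σ(δ₂a)) + δ₂(σ(δ₁a)); i.e. every k-bicocycle decomposes into a δ-coboundary plus a δ₁-coboundary plus a δ₂-coboundary. -/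
open Set

/-- The cube `[0,T]^k`. -/
def cube (T : ℝ) (k : ℕ) : Set (Fin k → ℝ) := {t | ∀ j, t j ∈ Set.Icc 0 T}

/-- Membership in `𝒞𝒞_{k,l}(V)`: continuity on `[0,T]^k × [0,T]^l` and vanishing
whenever two consecutive arguments in either group coincide. -/
def IsBiIncrement {V : Type*} [NormedAddCommGroup V] (T : ℝ) (k l : ℕ)
    (g : (Fin k → ℝ) → (Fin l → ℝ) → V) : Prop :=
  ContinuousOn (fun p : (Fin k → ℝ) × (Fin l → ℝ) => g p.1 p.2)
    ((cube T k) ×ˢ (cube T l)) ∧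
  ∀ s ∈ cube T k, ∀ t ∈ cube T l,
    ((∃ i j : Fin k, (j : ℕ) = (i : ℕ) + 1 ∧ s i = s j) ∨
     (∃ i j : Fin l, (j : ℕ) = (i : ℕ) + 1 ∧ t i = t j)) → g s t = 0

/-- The partial coboundary `δ₁` acting on the first group of arguments. -/
noncomputable def cob1 {V : Type*} [NormedAddCommGroup V] [NormedSpace ℝ V] {k l : ℕ}
    (g : (Fin k → ℝ) → (Fin l → ℝ) → V) : (Fin (k + 1) → ℝ) → (Fin l → ℝ) → V :=
  fun s t => ∑ i : Fin (k + 1), ((-1 : ℝ) ^ (i : ℕ)) • g (fun j => s (i.succAbove j)) t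

/-- The partial coboundary `δ₂` acting on the second group of arguments. -/
noncomputable def cob2 {V : Type*} [NormedAddCommGroup V] [NormedSpace ℝ V] {k l : ℕ}
    (g : (Fin k → ℝ) → (Fin l → ℝ) → V) : (Fin k → ℝ) → (Fin (l + 1) → ℝ) → V :=
  fun s t => ∑ i : Fin (l + 1), ((-1 : ℝ) ^ (i : ℕ)) • g s (fun j => t (i.succAbove j))

/-- `σ₁` fixes the first argument of the first group to `0`. -/
def sig1 {V : Type*} {k l : ℕ} (g : (Fin (k + 1) → ℝ) → (Fin l → ℝ) → V) :
    (Fin k → ℝ) → (Fin l → ℝ) → V :=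
  fun s t => g (Fin.cons 0 s) t

/-- `σ₂` fixes the first argument of the second group to `0`. -/
def sig2 {V : Type*} {k l : ℕ} (g : (Fin k → ℝ) → (Fin (l + 1) → ℝ) → V) :
    (Fin k → ℝ) → (Fin l → ℝ) → V :=
  fun s t => g s (Fin.cons 0 t)

/-! Freezing a first variable at `0` is a contracting homotopy for each partial coboundary:
`h = δ₁σ₁h + σ₁δ₁h` and `h = δ₂σ₂h + σ₂δ₂h`. Apply the second identity to `a`, then the first to
both resulting terms. Since `σ₁` commutes with `δ₂` and `σ₂` with `δ₁`, the term `δ₂σ₂a` gives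
`δ(σa) + δ₂(σ(δ₁a))`, while `σ₂δ₂a` gives `δ₁(σ(δ₂a)) + σ(δa)`, whose last summand vanishes by
the cocycle condition. So `q = σa` works, and it lies in `𝒞𝒞_{k−1,k−1}` because `0 ∈ [0,T]`. -/

lemma cons_mem_cube {T : ℝ} (hT : 0 ≤ T) {k : ℕ} {s : Fin k → ℝ} (hs : s ∈ cube T k) :
    (Fin.cons 0 s : Fin (k + 1) → ℝ) ∈ cube T (k + 1) :=
  Fin.cases (by simp [hT]) (fun m => by simpa using hs m)

lemma cons_comp_succ_succAbove {k : ℕ} (x : ℝ) (s : Fin (k + 1) → ℝ) (i : Fin (k + 1)) :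
    (fun j => (Fin.cons x s : Fin (k + 2) → ℝ) (i.succ.succAbove j)) =
      Fin.cons x (fun j => s (i.succAbove j)) := by
  funext m
  refine Fin.cases ?_ (fun m => ?_) m <;> simp [Fin.succ_succAbove_succ]

lemma IsBiIncrement.sig1_sig2 {V : Type*} [NormedAddCommGroup V] {T : ℝ} (hT : 0 ≤ T) {k l : ℕ}
    {g : (Fin (k + 1) → ℝ) → (Fin (l + 1) → ℝ) → V} (hg : IsBiIncrement T (k + 1) (l + 1) g) :
    IsBiIncrement T k l (sig1 (sig2 g)) := by
  constructor
  · have hcons : Continuous fun p : (Fin k → ℝ) × (Fin l → ℝ) =>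
        ((Fin.cons 0 p.1 : Fin (k + 1) → ℝ), (Fin.cons 0 p.2 : Fin (l + 1) → ℝ)) :=
      by fun_prop
    exact hg.1.comp hcons.continuousOn fun p hp => ⟨cons_mem_cube hT hp.1, cons_mem_cube hT hp.2⟩
  · intro s hs t ht hdiag
    refine hg.2 _ (cons_mem_cube hT hs) _ (cons_mem_cube hT ht) ?_
    rcases hdiag with ⟨i, j, hij, hval⟩ | ⟨i, j, hij, hval⟩
    · exact Or.inl ⟨i.succ, j.succ, by simp [hij], by simpa using hval⟩
    · exact Or.inr ⟨i.succ, j.succ, by simp [hij], by simpa using hval⟩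

section Homotopy

variable {V : Type*} [NormedAddCommGroup V] [NormedSpace ℝ V]

/-- `σ₁` is a contracting homotopy for `δ₁`: the `i = 0` term of `δ₁h (0, s)` is `h s`, and the
remaining terms are `-δ₁(σ₁h) s`. -/
lemma cob1_sig1_add_sig1_cob1 {k l : ℕ}
    (h : (Fin (k + 1) → ℝ) → (Fin l → ℝ) → V) (s : Fin (k + 1) → ℝ) (t : Fin l → ℝ) :
    cob1 (sig1 h) s t + sig1 (cob1 h) s t = h s t := by
  have hsig : sig1 (cob1 h) s t = h s t - cob1 (sig1 h) s t := by
    simp only [sig1, cob1, Fin.sum_univ_succ (n := k + 1), cons_comp_succ_succAbove,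
      Fin.val_zero, pow_zero, one_smul, Fin.val_succ, pow_succ, mul_neg_one, neg_smul,
      Finset.sum_neg_distrib, Fin.cons_succ, Fin.succAbove_zero, sub_eq_add_neg]
  rw [hsig, add_sub_cancel]

lemma cob2_sig2_add_sig2_cob2 {k l : ℕ}
    (h : (Fin k → ℝ) → (Fin (l + 1) → ℝ) → V) (s : Fin k → ℝ) (t : Fin (l + 1) → ℝ) :
    cob2 (sig2 h) s t + sig2 (cob2 h) s t = h s t :=
  -- `δ₂` and `σ₂` are `δ₁` and `σ₁` acting on `flip h`, definitionally
  cob1_sig1_add_sig1_cob1 (flip h) t s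

lemma cob1_cob2_comm {k l : ℕ}
    (g : (Fin k → ℝ) → (Fin l → ℝ) → V) (s : Fin (k + 1) → ℝ) (t : Fin (l + 1) → ℝ) :
    cob1 (cob2 g) s t = cob2 (cob1 g) s t := by
  simp only [cob1, cob2, Finset.smul_sum, smul_smul]
  rw [Finset.sum_comm]
  simp only [mul_comm]

end Homotopy

theorem stmt13_general
    {V : Type*} [NormedAddCommGroup V] [NormedSpace ℝ V]
    (T : ℝ) (hT : 0 < T) (n : ℕ)
    (a : (Fin (n + 1) → ℝ) → (Fin (n + 1) → ℝ) → V)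
    (ha : IsBiIncrement T (n + 1) (n + 1) a)
    (hcocycle : ∀ s ∈ cube T (n + 2), ∀ t ∈ cube T (n + 2), cob1 (cob2 a) s t = 0) :
    ∃ q : (Fin n → ℝ) → (Fin n → ℝ) → V,
      IsBiIncrement T n n q ∧
      ∀ s ∈ cube T (n + 1), ∀ t ∈ cube T (n + 1),
        a s t = cob1 (cob2 q) s t
          + cob1 (sig1 (sig2 (cob2 a))) s t
          + cob2 (sig2 (sig1 (cob1 a))) s t := by
  refine ⟨sig1 (sig2 a), ha.sig1_sig2 hT.le, fun s hs t ht => ?_⟩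
  have hδ₂σ₂a : cob2 (sig2 a) s t =
      cob1 (cob2 (sig1 (sig2 a))) s t + cob2 (sig2 (sig1 (cob1 a))) s t := by
    rw [← cob1_sig1_add_sig1_cob1 (cob2 (sig2 a))]
    exact congrArg _ (cob1_cob2_comm (sig2 a) (Fin.cons 0 s) t)
  have hσ₂δ₂a : sig2 (cob2 a) s t = cob1 (sig1 (sig2 (cob2 a))) s t := by
    rw [← cob1_sig1_add_sig1_cob1 (sig2 (cob2 a)), add_eq_left]
    -- `σ₁δ₁σ₂δ₂a` is `δa` evaluated at `(0, s)` and `(0, t)`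
    exact hcocycle _ (cons_mem_cube hT.le hs) _ (cons_mem_cube hT.le ht)
  rw [← cob2_sig2_add_sig2_cob2 a, hδ₂σ₂a, hσ₂δ₂a]
  abel

/-- **Decomposition of bicocycles.**
If `a ∈ 𝒞𝒞_{k,k}(V)` (here `k = n+1 ≥ 2`) satisfies `δa = 0`, then
`a = δq + δ₁(σ(δ₂a)) + δ₂(σ(δ₁a))` for some `q ∈ 𝒞𝒞_{k−1,k−1}(V)`, where `σ = σ₁σ₂`. -/
theorem stmt13
    {V : Type*} [NormedAddCommGroup V] [NormedSpace ℝ V]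
    (T : ℝ) (hT : 0 < T) (n : ℕ) (hn : 1 ≤ n)
    (a : (Fin (n + 1) → ℝ) → (Fin (n + 1) → ℝ) → V)
    (ha : IsBiIncrement T (n + 1) (n + 1) a)
    (hcocycle : ∀ s ∈ cube T (n + 2), ∀ t ∈ cube T (n + 2), cob1 (cob2 a) s t = 0) :
    ∃ q : (Fin n → ℝ) → (Fin n → ℝ) → V,
      IsBiIncrement T n n q ∧
      ∀ s ∈ cube T (n + 1), ∀ t ∈ cube T (n + 1),
        a s t = cob1 (cob2 q) s t
          + cob1 (sig1 (sig2 (cob2 a))) s t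
          + cob2 (sig2 (sig1 (cob1 a))) s t :=
  stmt13_general T hT n a ha hcocycle
end
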